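/- For the classical density proportional to e^{δx − εz²/2} on the unit sphere, ⟨z²⟩ = 1/3 − 2ε/45 + 2ε²/945 − δ²/45 + O(3) (up to third order terms in δ and ε). -/

import Mathlib

open Asymptotics
noncomputable section

/-- Normalizing integral `∫_S e^{δx − εz²/2} dS` over the unit sphere, in
spherical coordinates. -/
def sphDen (δ ε : ℝ) : ℝ :=
  ∫ θ in (0 : ℝ)..Real.pi, ∫ φ in (0 : ℝ)..(2 * Real.pi),
    Real.sin θ *
      Real.exp (δ * (Real.sin θ * Real.cos φ) - ε * Real.cos θ ^ 2 / 2)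

/-- Mean of the observable `g(x,z)` (with `x = sinθ cosφ`, `z = cosθ`) for the
classical density proportional to `e^{δx − εz²/2}` on the unit sphere. -/
def sphAvg (g : ℝ → ℝ → ℝ) (δ ε : ℝ) : ℝ :=
  (∫ θ in (0 : ℝ)..Real.pi, ∫ φ in (0 : ℝ)..(2 * Real.pi),
      Real.sin θ * g (Real.sin θ * Real.cos φ) (Real.cos θ) *
        Real.exp (δ * (Real.sin θ * Real.cos φ) - ε * Real.cos θ ^ 2 / 2))
    / sphDen δ ε

/-!
Let `M_m(δ, ε) = ∫_S z^m e^{δx − εz²/2} dS`, so that `⟨z²⟩ = M₂ / M₀`. Replacing the exponential by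
its second-order Taylor polynomial costs `O((|δ| + |ε|)³)` uniformly on the sphere, and the Taylor
polynomial integrates in closed form: the azimuthal integral kills odd powers of `cos φ`, and what
remains is a combination of `∫₀^π sin θ cos^k θ dθ`. With `T` the claimed expansion, `M₂ − T M₀` is
then a polynomial without terms of order below three, up to `O(3)`, and `M₀ → 4π`.
-/
open Real intervalIntegral Filter Topology

def expRem (v : ℝ) : ℝ := exp v - (1 + v + v ^ 2 / 2)

@[fun_prop]
lemma continuous_expRem : Continuous expRem := by unfold expRem; fun_prop

lemma abs_expRem_le {v : ℝ} (hv : |v| ≤ 1) : |expRem v| ≤ |v| ^ 3 := by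
  have h := Real.exp_bound hv (n := 3) (by norm_num)
  norm_num [Finset.sum_range_succ, Nat.factorial] at h
  exact h.trans (by nlinarith [pow_nonneg (abs_nonneg v) 3])

lemma integral_cos_quadratic (a b c : ℝ) :
    ∫ φ in (0 : ℝ)..2 * π, (a + b * cos φ + c * cos φ ^ 2) = 2 * π * a + π * c := by
  have hint {f : ℝ → ℝ} (hf : Continuous f) : IntervalIntegrable f MeasureTheory.volume 0 (2 * π) :=
    hf.intervalIntegrable _ _
  rw [integral_add (hint (by fun_prop)) (hint (by fun_prop)),
    integral_add (hint (by fun_prop)) (hint (by fun_prop)),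
    integral_const, integral_const_mul, integral_const_mul, integral_cos, integral_cos_sq]
  simp
  ring

def sinCosMoment (k : ℕ) : ℝ := (1 - (-1) ^ (k + 1)) / (k + 1)

lemma integral_sin_mul_cos_pow (k : ℕ) :
    ∫ θ in (0 : ℝ)..π, sin θ * cos θ ^ k = sinCosMoment k := by
  have hk : (k : ℝ) + 1 ≠ 0 := by positivity
  have hderiv (θ : ℝ) :
      HasDerivAt (fun t => -cos t ^ (k + 1) / (k + 1)) (sin θ * cos θ ^ k) θ := by
    refine (((hasDerivAt_cos θ).pow (k + 1)).neg.div_const ((k : ℝ) + 1)).congr_deriv ?_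
    rw [Nat.add_sub_cancel]
    field_simp
    push_cast
    ring
  rw [integral_eq_sub_of_hasDerivAt (fun θ _ => hderiv θ)
    ((by fun_prop : Continuous _).intervalIntegrable _ _), sinCosMoment]
  simp
  ring

lemma norm_integral_integral_le {E : Type*} [NormedAddCommGroup E] [NormedSpace ℝ E]
    {f : ℝ → ℝ → E} {C : ℝ} (a b c d : ℝ) (hf : ∀ x y, ‖f x y‖ ≤ C) :
    ‖∫ x in a..b, ∫ y in c..d, f x y‖ ≤ C * |d - c| * |b - a| :=
  norm_integral_le_of_norm_le_const fun x _ =>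
    norm_integral_le_of_norm_le_const fun y _ => hf x y

lemma abs_sphExponent_le (δ ε θ φ : ℝ) :
    |δ * (sin θ * cos φ) - ε * cos θ ^ 2 / 2| ≤ |δ| + |ε| := by
  have hx : |sin θ * cos φ| ≤ 1 := by
    rw [abs_mul]; exact mul_le_one₀ (abs_sin_le_one θ) (abs_nonneg _) (abs_cos_le_one φ)
  have hz : |cos θ ^ 2 / 2| ≤ 1 := by
    rw [abs_div, abs_pow, abs_two]
    nlinarith [abs_cos_le_one θ, abs_nonneg (cos θ)]
  calc _ ≤ |δ * (sin θ * cos φ)| + |ε * (cos θ ^ 2 / 2)| := by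
        rw [mul_div_assoc]; exact abs_sub _ _
    _ ≤ |δ| * 1 + |ε| * 1 := by
        rw [abs_mul δ, abs_mul ε]; gcongr
    _ = |δ| + |ε| := by ring

def sphMoment (m : ℕ) (δ ε : ℝ) : ℝ :=
  ∫ θ in (0 : ℝ)..π, ∫ φ in (0 : ℝ)..2 * π,
    sin θ * cos θ ^ m * exp (δ * (sin θ * cos φ) - ε * cos θ ^ 2 / 2)

def sphMomentTaylor (m : ℕ) (δ ε : ℝ) : ℝ :=
  π * ((2 + δ ^ 2 / 2) * sinCosMoment m - (ε + δ ^ 2 / 2) * sinCosMoment (m + 2)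
    + ε ^ 2 / 4 * sinCosMoment (m + 4))

lemma integral_expTaylor_azimuth (s c δ ε : ℝ) :
    ∫ φ in (0 : ℝ)..2 * π, (1 + (δ * (s * cos φ) - ε * c ^ 2 / 2)
        + (δ * (s * cos φ) - ε * c ^ 2 / 2) ^ 2 / 2)
      = π * (2 - ε * c ^ 2 + ε ^ 2 * c ^ 4 / 4 + δ ^ 2 * s ^ 2 / 2) := by
  calc _ = ∫ φ in (0 : ℝ)..2 * π, ((1 - ε * c ^ 2 / 2 + ε ^ 2 * c ^ 4 / 8)
          + (δ * s - δ * ε * s * c ^ 2 / 2) * cos φ + δ ^ 2 * s ^ 2 / 2 * cos φ ^ 2) :=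
        integral_congr fun φ _ => by ring
    _ = _ := by rw [integral_cos_quadratic]; ring

lemma integral_sin_mul_cos_pow_mul_expTaylor_azimuth (m : ℕ) (δ ε : ℝ) :
    ∫ θ in (0 : ℝ)..π, sin θ * cos θ ^ m
        * (π * (2 - ε * cos θ ^ 2 + ε ^ 2 * cos θ ^ 4 / 4 + δ ^ 2 * sin θ ^ 2 / 2))
      = sphMomentTaylor m δ ε := by
  have hint {f : ℝ → ℝ} (hf : Continuous f) : IntervalIntegrable f MeasureTheory.volume 0 π :=
    hf.intervalIntegrable _ _
  calc _ = ∫ θ in (0 : ℝ)..π, π * ((2 + δ ^ 2 / 2) * (sin θ * cos θ ^ m)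
          - (ε + δ ^ 2 / 2) * (sin θ * cos θ ^ (m + 2))
          + ε ^ 2 / 4 * (sin θ * cos θ ^ (m + 4))) :=
        integral_congr fun θ _ => by rw [sin_sq]; ring
    _ = _ := by
      rw [integral_const_mul, integral_add (hint (by fun_prop)) (hint (by fun_prop)),
        integral_sub (hint (by fun_prop)) (hint (by fun_prop)), integral_const_mul,
        integral_const_mul, integral_const_mul, integral_sin_mul_cos_pow,
        integral_sin_mul_cos_pow, integral_sin_mul_cos_pow, sphMomentTaylor]

lemma sphMoment_eq (m : ℕ) (δ ε : ℝ) :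
    sphMoment m δ ε = sphMomentTaylor m δ ε + ∫ θ in (0 : ℝ)..π, ∫ φ in (0 : ℝ)..2 * π,
      sin θ * cos θ ^ m * expRem (δ * (sin θ * cos φ) - ε * cos θ ^ 2 / 2) := by
  have hrem : Continuous fun θ => ∫ φ in (0 : ℝ)..2 * π,
      sin θ * cos θ ^ m * expRem (δ * (sin θ * cos φ) - ε * cos θ ^ 2 / 2) :=
    continuous_parametric_intervalIntegral_of_continuous' (by fun_prop) _ _
  have hinner (θ : ℝ) : ∫ φ in (0 : ℝ)..2 * π,
        sin θ * cos θ ^ m * exp (δ * (sin θ * cos φ) - ε * cos θ ^ 2 / 2)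
      = sin θ * cos θ ^ m
          * (π * (2 - ε * cos θ ^ 2 + ε ^ 2 * cos θ ^ 4 / 4 + δ ^ 2 * sin θ ^ 2 / 2))
        + ∫ φ in (0 : ℝ)..2 * π,
          sin θ * cos θ ^ m * expRem (δ * (sin θ * cos φ) - ε * cos θ ^ 2 / 2) := by
    rw [← integral_expTaylor_azimuth, ← integral_const_mul, ← integral_add
      ((by fun_prop : Continuous _).intervalIntegrable _ _)
      ((by fun_prop : Continuous _).intervalIntegrable _ _)]
    exact integral_congr fun φ _ => by simp only [expRem]; ring
  rw [sphMoment, integral_congr fun θ _ => hinner θ, integral_add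
    ((by fun_prop : Continuous _).intervalIntegrable _ _) (hrem.intervalIntegrable _ _),
    integral_sin_mul_cos_pow_mul_expTaylor_azimuth]

lemma sphAvg_z_pow (m : ℕ) (δ ε : ℝ) :
    sphAvg (fun _ z => z ^ m) δ ε = sphMoment m δ ε / sphMoment 0 δ ε := by
  simp only [sphAvg, sphDen, sphMoment, pow_zero, mul_one]

lemma sphMoment_sub_sphMomentTaylor_isBigO (m : ℕ) :
    (fun p : ℝ × ℝ => sphMoment m p.1 p.2 - sphMomentTaylor m p.1 p.2)
      =O[𝓝 0] fun p => ‖p‖ ^ 3 := by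
  refine IsBigO.of_bound (16 * π ^ 2) ?_
  filter_upwards [Metric.closedBall_mem_nhds (0 : ℝ × ℝ) (by norm_num : (0 : ℝ) < 1 / 2)]
    with p hp
  rw [mem_closedBall_zero_iff] at hp
  have hsum : |p.1| + |p.2| ≤ 2 * ‖p‖ := by
    have := norm_fst_le p; have := norm_snd_le p
    simp only [Real.norm_eq_abs] at *
    linarith
  have hpt (θ φ : ℝ) :
      |sin θ * cos θ ^ m * expRem (p.1 * (sin θ * cos φ) - p.2 * cos θ ^ 2 / 2)|
        ≤ (2 * ‖p‖) ^ 3 := by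
    have hu := (abs_sphExponent_le p.1 p.2 θ φ).trans hsum
    have hsc : |sin θ * cos θ ^ m| ≤ 1 := by
      rw [abs_mul, abs_pow]
      exact mul_le_one₀ (abs_sin_le_one θ) (by positivity)
        (pow_le_one₀ (abs_nonneg _) (abs_cos_le_one θ))
    calc _ ≤ 1 * |p.1 * (sin θ * cos φ) - p.2 * cos θ ^ 2 / 2| ^ 3 := by
          rw [abs_mul]
          exact mul_le_mul hsc (abs_expRem_le (by linarith)) (abs_nonneg _) zero_le_one
      _ ≤ (2 * ‖p‖) ^ 3 := by rw [one_mul]; gcongr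
  rw [sphMoment_eq, add_sub_cancel_left]
  calc _ ≤ (2 * ‖p‖) ^ 3 * |2 * π - 0| * |π - 0| := norm_integral_integral_le _ _ _ _ hpt
    _ = 16 * π ^ 2 * ‖‖p‖ ^ 3‖ := by
      rw [norm_pow, norm_norm, sub_zero, sub_zero, abs_of_pos pi_pos, abs_of_pos two_pi_pos]
      ring

lemma tendsto_sphMoment_zero :
    Tendsto (fun p : ℝ × ℝ => sphMoment 0 p.1 p.2) (𝓝 0) (𝓝 (4 * π)) := by
  have hrem := (sphMoment_sub_sphMomentTaylor_isBigO 0).trans_tendsto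
    ((continuous_norm.pow 3).tendsto' 0 0 (by simp))
  have htaylor : Tendsto (fun p : ℝ × ℝ => sphMomentTaylor 0 p.1 p.2) (𝓝 0) (𝓝 (4 * π)) := by
    convert (by unfold sphMomentTaylor; fun_prop :
      Continuous fun p : ℝ × ℝ => sphMomentTaylor 0 p.1 p.2).tendsto 0 using 2
    norm_num [sphMomentTaylor, sinCosMoment]
    ring
  simpa using hrem.add htaylor

lemma isBigO_monomial {a b : ℕ} (hab : 3 ≤ a + b) :
    (fun p : ℝ × ℝ => p.1 ^ a * p.2 ^ b) =O[𝓝 0] fun p => ‖p‖ ^ 3 := by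
  refine IsBigO.of_bound 1 ?_
  filter_upwards [Metric.closedBall_mem_nhds (0 : ℝ × ℝ) one_pos] with p hp
  rw [mem_closedBall_zero_iff] at hp
  calc ‖p.1 ^ a * p.2 ^ b‖ = ‖p.1‖ ^ a * ‖p.2‖ ^ b := by rw [norm_mul, norm_pow, norm_pow]
    _ ≤ ‖p‖ ^ a * ‖p‖ ^ b := by gcongr; exacts [norm_fst_le p, norm_snd_le p]
    _ ≤ ‖p‖ ^ 3 := by rw [← pow_add]; exact pow_le_pow_of_le_one (norm_nonneg p) hp hab
    _ = 1 * ‖‖p‖ ^ 3‖ := by rw [one_mul, norm_pow, norm_norm]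

lemma sphMomentTaylor_two_sub_mul_isBigO :
    (fun p : ℝ × ℝ => sphMomentTaylor 2 p.1 p.2
        - (1 / 3 - 2 * p.2 / 45 + 2 * p.2 ^ 2 / 945 - p.1 ^ 2 / 45) * sphMomentTaylor 0 p.1 p.2)
      =O[𝓝 0] fun p => ‖p‖ ^ 3 := by
  have hpoly : (fun p : ℝ × ℝ => sphMomentTaylor 2 p.1 p.2
        - (1 / 3 - 2 * p.2 / 45 + 2 * p.2 ^ 2 / 945 - p.1 ^ 2 / 45) * sphMomentTaylor 0 p.1 p.2)
      = fun p => π * (2 / 135 * (p.1 ^ 2 * p.2 ^ 1) + 2 / 135 * (p.1 ^ 4 * p.2 ^ 0)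
          + 83 / 14175 * (p.1 ^ 0 * p.2 ^ 3) + 23 / 28350 * (p.1 ^ 2 * p.2 ^ 2)
          - 1 / 4725 * (p.1 ^ 0 * p.2 ^ 4)) := by
    funext p
    norm_num [sphMomentTaylor, sinCosMoment]
    ring
  rw [hpoly]
  refine IsBigO.const_mul_left ?_ π
  refine ((((?_ : IsBigO _ _ _).add ?_).add ?_).add ?_).sub ?_ <;>
    exact (isBigO_monomial (by norm_num)).const_mul_left _

/-- the expansion
`⟨z²⟩ = 1/3 − 2ε/45 + 2ε²/945 − δ²/45 + O(3)` of the mean of `z²` for the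
classical density `∝ e^{δx − εz²/2}` on the unit sphere, up to terms of third
order in `(δ, ε)` jointly. -/
theorem mean_z_sq_expansion :
    (fun p : ℝ × ℝ => sphAvg (fun _ z => z ^ 2) p.1 p.2
        - (1 / 3 - 2 * p.2 / 45 + 2 * p.2 ^ 2 / 945 - p.1 ^ 2 / 45))
      =O[nhds (0 : ℝ × ℝ)] fun p : ℝ × ℝ => ‖p‖ ^ 3 := by
  set T : ℝ × ℝ → ℝ := fun p => 1 / 3 - 2 * p.2 / 45 + 2 * p.2 ^ 2 / 945 - p.1 ^ 2 / 45
  have hT : T =O[𝓝 0] fun _ => (1 : ℝ) :=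
    ((by fun_prop : Continuous T).tendsto 0).isBigO_one ℝ
  have hnum : (fun p : ℝ × ℝ => sphMoment 2 p.1 p.2 - T p * sphMoment 0 p.1 p.2)
      =O[𝓝 0] fun p => ‖p‖ ^ 3 := by
    have hrem0 := hT.mul (sphMoment_sub_sphMomentTaylor_isBigO 0)
    simp only [one_mul] at hrem0
    refine (((sphMoment_sub_sphMomentTaylor_isBigO 2).sub hrem0).add
      sphMomentTaylor_two_sub_mul_isBigO).congr_left fun p => ?_
    ring
  have hD := tendsto_sphMoment_zero
  have hinv := (hD.inv₀ (by positivity)).isBigO_one ℝ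
  refine (hnum.mul hinv).congr' ?_ (.of_eq (by simp))
  filter_upwards [hD.eventually_ne (by positivity)] with p hp
  rw [sphAvg_z_pow]
  field_simp
  ring
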